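/- arXiv:1801.01521 — 2 statements merged into one kernel-verified Lean document; each statement's English description precedes it below -/
import Mathlib

section
/- Let α ≥ β' > 0 and a, b > 0, and let η, ξ be independent non-negative random variables with P(η > t) = (a + o(1)) t^{-α} and P(ξ > t) = (b + o(1)) t^{-β'} as t → ∞. Put c = a + b if α = β', and c = b if α > β'. Then P(η + ξ > t) = (c + o(1)) t^{-β'} as t → ∞. -/
/-!
Writing `F(t) = P(η + ξ > t)`, two elementary bounds sandwich `F`. From below,
`{η > t} ∪ {ξ > t} ⊆ {η + ξ > t}` and independence give
`F(t) ≥ P(η > t) + P(ξ > t) - P(η > t) P(ξ > t)`.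
From above, for `0 < δ < 1`, if neither summand exceeds `(1 - δ) t` but the sum exceeds `t`,
then both exceed `δ t`, so
`F(t) ≤ P(η > (1 - δ) t) + P(ξ > (1 - δ) t) + P(η > δ t) P(ξ > δ t)`.
After multiplying by `t ^ β'`, the lower bound tends to `c` and the upper bound to
`c (1 - δ) ^ (-β')`; the product terms vanish because one factor is `O(t ^ (-β'))` and the other
tends to `0`, and `η` contributes only when `α = β'`. Letting `δ → 0` gives the claim.
-/

open MeasureTheory ProbabilityTheory Filter Real Topology Set

section Asymptotics

variable {g h : ℝ → ℝ} {α β a b : ℝ}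

lemma tendsto_zero_of_tendsto_mul_rpow (hβ : 0 < β)
    (hg : Tendsto (fun t => g t * t ^ β) atTop (𝓝 a)) : Tendsto g atTop (𝓝 0) := by
  have hlim := hg.mul (tendsto_rpow_neg_atTop hβ)
  rw [mul_zero] at hlim
  refine hlim.congr' ?_
  filter_upwards [eventually_gt_atTop 0] with t ht
  rw [mul_assoc, ← rpow_add ht, add_neg_cancel, rpow_zero, mul_one]

lemma tendsto_comp_const_mul_mul_rpow (hg : Tendsto (fun t => g t * t ^ β) atTop (𝓝 a))
    {s : ℝ} (hs : 0 < s) :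
    Tendsto (fun t => g (s * t) * t ^ β) atTop (𝓝 (a * s ^ (-β))) := by
  have hlim := (hg.comp (tendsto_id.const_mul_atTop hs)).mul_const (s ^ (-β))
  refine hlim.congr' ?_
  filter_upwards [eventually_gt_atTop 0] with t ht
  have hs_inv : s ^ β * s ^ (-β) = 1 := by rw [← rpow_add hs, add_neg_cancel, rpow_zero]
  simp only [Function.comp_apply, id, mul_rpow hs.le ht.le]
  linear_combination g (s * t) * t ^ β * hs_inv

lemma tendsto_comp_const_mul_mul_rpow_of_le (hβα : β ≤ α)
    (hg : Tendsto (fun t => g t * t ^ α) atTop (𝓝 a)) {s : ℝ} (hs : 0 < s) :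
    Tendsto (fun t => g (s * t) * t ^ β) atTop
      (𝓝 ((if α = β then a else 0) * s ^ (-β))) := by
  rcases hβα.eq_or_lt with rfl | hlt
  · simpa using tendsto_comp_const_mul_mul_rpow hg hs
  have hpow : Tendsto (fun t : ℝ => t ^ (β - α)) atTop (𝓝 0) := by
    simpa [neg_sub] using tendsto_rpow_neg_atTop (sub_pos.mpr hlt)
  have hlim := (tendsto_comp_const_mul_mul_rpow hg hs).mul hpow
  rw [mul_zero] at hlim
  rw [if_neg hlt.ne', zero_mul]
  refine hlim.congr' ?_
  filter_upwards [eventually_gt_atTop 0] with t ht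
  rw [mul_assoc, ← rpow_add ht, add_sub_cancel]

lemma tendsto_add_comp_const_mul_mul_rpow (hβα : β ≤ α)
    (hg : Tendsto (fun t => g t * t ^ α) atTop (𝓝 a))
    (hh : Tendsto (fun t => h t * t ^ β) atTop (𝓝 b)) {s : ℝ} (hs : 0 < s) :
    Tendsto (fun t => (g (s * t) + h (s * t)) * t ^ β) atTop
      (𝓝 (((if α = β then a else 0) + b) * s ^ (-β))) := by
  simpa only [add_mul] using
    (tendsto_comp_const_mul_mul_rpow_of_le hβα hg hs).add
      (tendsto_comp_const_mul_mul_rpow hh hs)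

lemma tendsto_mul_comp_const_mul_mul_rpow (hα : 0 < α)
    (hg : Tendsto (fun t => g t * t ^ α) atTop (𝓝 a))
    (hh : Tendsto (fun t => h t * t ^ β) atTop (𝓝 b)) {r : ℝ} (hr : 0 < r) :
    Tendsto (fun t => g (r * t) * h (r * t) * t ^ β) atTop (𝓝 0) := by
  have hg0 := (tendsto_zero_of_tendsto_mul_rpow hα hg).comp
    (tendsto_id.const_mul_atTop hr)
  simpa only [Function.comp_apply, id, zero_mul, mul_assoc] using
    hg0.mul (tendsto_comp_const_mul_mul_rpow hh hr)

end Asymptotics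

section Sandwich

variable {ι α β : Type*} [TopologicalSpace β] [LinearOrder β] [OrderTopology β]

lemma tendsto_of_tendsto_of_eventually_le_of_upper_bounds {l : Filter α} {p : Filter ι}
    [p.NeBot] {f lo : α → β} {up : ι → α → β} {L : ι → β} {c : β}
    (hlo : Tendsto lo l (𝓝 c)) (hup : ∀ᶠ i in p, Tendsto (up i) l (𝓝 (L i)))
    (hL : Tendsto L p (𝓝 c)) (hlof : lo ≤ᶠ[l] f) (hfup : ∀ᶠ i in p, f ≤ᶠ[l] up i) :
    Tendsto f l (𝓝 c) := by
  refine tendsto_order.2 ⟨fun b hb => ?_, fun b hb => ?_⟩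
  · filter_upwards [hlo.eventually_const_lt hb, hlof] with x hx hle using hx.trans_le hle
  · obtain ⟨i, hLi, hi, hfi⟩ := ((hL.eventually_lt_const hb).and (hup.and hfup)).exists
    filter_upwards [hi.eventually_lt_const hLi, hfi] with x hx hle using hle.trans_lt hx

end Sandwich

section Tails

variable {Ω : Type*} [MeasurableSpace Ω] {μ : Measure Ω} {X Y : Ω → ℝ}

lemma ProbabilityTheory.IndepFun.measureReal_tail_inter (hXY : IndepFun X Y μ) (s t : ℝ) :
    μ.real ({ω | s < X ω} ∩ {ω | t < Y ω}) = μ.real {ω | s < X ω} * μ.real {ω | t < Y ω} := by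
  simp only [Measure.real, ← ENNReal.toReal_mul]
  congr 1
  exact hXY.measure_inter_preimage_eq_mul (Ioi s) (Ioi t) measurableSet_Ioi measurableSet_Ioi

lemma measureReal_tail_add_ge [IsFiniteMeasure μ] (hXY : IndepFun X Y μ) (hY : Measurable Y)
    (hX0 : ∀ ω, 0 ≤ X ω) (hY0 : ∀ ω, 0 ≤ Y ω) (t : ℝ) :
    μ.real {ω | t < X ω} + μ.real {ω | t < Y ω} - μ.real {ω | t < X ω} * μ.real {ω | t < Y ω}
      ≤ μ.real {ω | t < X ω + Y ω} := by
  have hsub : {ω | t < X ω} ∪ {ω | t < Y ω} ⊆ {ω | t < X ω + Y ω} := by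
    rintro ω (hω | hω) <;> simp only [mem_ofPred_eq] at hω ⊢ <;> linarith [hX0 ω, hY0 ω]
  have hunion := measureReal_union_add_inter (μ := μ) (s := {ω | t < X ω})
    (t := {ω | t < Y ω}) (hY measurableSet_Ioi)
  rw [hXY.measureReal_tail_inter] at hunion
  linarith [measureReal_mono (μ := μ) hsub]

lemma measureReal_tail_add_le [IsFiniteMeasure μ] (hXY : IndepFun X Y μ) (δ t : ℝ) :
    μ.real {ω | t < X ω + Y ω} ≤ μ.real {ω | (1 - δ) * t < X ω} + μ.real {ω | (1 - δ) * t < Y ω}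
      + μ.real {ω | δ * t < X ω} * μ.real {ω | δ * t < Y ω} := by
  have hsub : {ω | t < X ω + Y ω} ⊆ {ω | (1 - δ) * t < X ω} ∪ {ω | (1 - δ) * t < Y ω}
      ∪ ({ω | δ * t < X ω} ∩ {ω | δ * t < Y ω}) := by
    intro ω hω
    simp only [mem_union, mem_inter_iff, mem_ofPred_eq] at hω ⊢
    by_contra! hnot
    obtain ⟨⟨hX, hY⟩, hδ⟩ := hnot
    by_cases hXδ : δ * t < X ω
    · linarith [hδ hXδ]
    · linarith
  calc μ.real {ω | t < X ω + Y ω}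
      ≤ μ.real ({ω | (1 - δ) * t < X ω} ∪ {ω | (1 - δ) * t < Y ω})
        + μ.real ({ω | δ * t < X ω} ∩ {ω | δ * t < Y ω}) :=
        (measureReal_mono hsub).trans (measureReal_union_le _ _)
    _ ≤ _ := by
        rw [hXY.measureReal_tail_inter]
        gcongr
        exact measureReal_union_le _ _

end Tails

theorem statement5_general {Ω : Type*} [MeasureSpace Ω] [IsProbabilityMeasure (ℙ : Measure Ω)]
    (α β' a b : ℝ) (hβ' : 0 < β') (hβα : β' ≤ α)
    (η ξ : Ω → ℝ) (hξmeas : Measurable ξ)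
    (hηnn : ∀ ω, 0 ≤ η ω) (hξnn : ∀ ω, 0 ≤ ξ ω)
    (hindep : IndepFun η ξ ℙ)
    (hηTail : Tendsto (fun t : ℝ => (ℙ {ω | t < η ω}).toReal * t ^ α) atTop (𝓝 a))
    (hξTail : Tendsto (fun t : ℝ => (ℙ {ω | t < ξ ω}).toReal * t ^ β') atTop (𝓝 b)) :
    Tendsto (fun t : ℝ => (ℙ {ω | t < η ω + ξ ω}).toReal * t ^ β')
      atTop (𝓝 (if α = β' then a + b else b)) := by
  set c := (if α = β' then a else 0) + b
  have hc : (if α = β' then a + b else b) = c := by split_ifs <;> simp [c, *]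
  have hα : 0 < α := hβ'.trans_le hβα
  have hsum (s : ℝ) (hs : 0 < s) := tendsto_add_comp_const_mul_mul_rpow hβα hηTail hξTail hs
  have hprod (r : ℝ) (hr : 0 < r) := tendsto_mul_comp_const_mul_mul_rpow hα hηTail hξTail hr
  have hlower := (hsum 1 one_pos).sub (hprod 1 one_pos)
  simp only [one_mul, one_rpow, mul_one, sub_zero, ← sub_mul] at hlower
  have hupper (δ : ℝ) (hδ : δ ∈ Ioo 0 1) :=
    (hsum (1 - δ) (sub_pos.2 hδ.2)).add (hprod δ hδ.1)
  simp only [add_zero, ← add_mul] at hupper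
  have hcont : Tendsto (fun δ : ℝ => c * (1 - δ) ^ (-β')) (𝓝[>] 0) (𝓝 c) := by
    have hcont₀ : ContinuousAt (fun δ : ℝ => c * (1 - δ) ^ (-β')) 0 :=
      continuousAt_const.mul ((continuousAt_const.sub continuousAt_id).rpow_const
        (Or.inl (by norm_num)))
    simpa using hcont₀.continuousWithinAt.tendsto (s := Ioi 0)
  rw [hc]
  refine tendsto_of_tendsto_of_eventually_le_of_upper_bounds hlower
    (eventually_of_mem (Ioo_mem_nhdsGT one_pos) hupper) hcont ?_ ?_
  · filter_upwards [eventually_gt_atTop 0] with t ht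
    exact mul_le_mul_of_nonneg_right (measureReal_tail_add_ge hindep hξmeas hηnn hξnn t)
      (rpow_nonneg ht.le _)
  · filter_upwards with δ
    filter_upwards [eventually_gt_atTop 0] with t ht
    exact mul_le_mul_of_nonneg_right (measureReal_tail_add_le hindep δ t) (rpow_nonneg ht.le _)

/-- Lemma 4.  Let `α ≥ β' > 0` and `a, b > 0`, let `η, ξ` be
independent non-negative random variables with `P(η > t) = (a + o(1)) t^{-α}`
and `P(ξ > t) = (b + o(1)) t^{-β'}`.  With `c = a + b` if `α = β'` and `c = b`
if `α > β'`, one has `P(η + ξ > t) = (c + o(1)) t^{-β'}` as `t → ∞`. -/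
theorem statement5 {Ω : Type*} [MeasureSpace Ω] [IsProbabilityMeasure (ℙ : Measure Ω)]
    (α β' a b : ℝ) (hβ' : 0 < β') (hβα : β' ≤ α) (ha : 0 < a) (hb : 0 < b)
    (η ξ : Ω → ℝ) (hηmeas : Measurable η) (hξmeas : Measurable ξ)
    (hηnn : ∀ ω, 0 ≤ η ω) (hξnn : ∀ ω, 0 ≤ ξ ω)
    (hindep : IndepFun η ξ ℙ)
    (hηTail : Tendsto (fun t : ℝ => (ℙ {ω | t < η ω}).toReal * t ^ α) atTop (𝓝 a))
    (hξTail : Tendsto (fun t : ℝ => (ℙ {ω | t < ξ ω}).toReal * t ^ β') atTop (𝓝 b)) :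
    Tendsto (fun t : ℝ => (ℙ {ω | t < η ω + ξ ω}).toReal * t ^ β')
      atTop (𝓝 (if α = β' then a + b else b)) :=
  statement5_general α β' a b hβ' hβα η ξ hξmeas hηnn hξnn hindep hηTail hξTail
end

section
/- Let β > 0, assume 0 < a_1, a_3 < ∞ and 0 < b_1 < ∞, and fix an integer k ≥ 2. Suppose that conditionally on (X_1, Y_1): Λ_1 is Poisson with mean X_1 β^{-1/2} b_1; Λ_0 is Poisson with mean Y_1 β^{1/2} a_1; d_* = Σ_{j=1}^{Λ_0} τ_j with (τ_j) i.i.d. as in the context; and d_* and Λ_1 are conditionally independent. Then E[ X_1^3 Y_1 · P(d_* + Λ_1 = k−2 | X_1, Y_1) ] = a_3 b_1 · P(d_*^{(1)} + Λ_1^{(3)} = k−2), where d_*^{(1)} and Λ_1^{(3)} are independent. -/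
open MeasureTheory ProbabilityTheory Filter Real Topology

noncomputable section

namespace RIG

/-- Poisson probability with mean `a`. -/
def pois (a : ℝ) (s : ℕ) : ℝ := Real.exp (-a) * a ^ s / (s.factorial : ℝ)

/-- `r`-th moment of a distribution on ℝ (so `mom PX r = a_r`, `mom PY r = b_r`). -/
def mom (P : Measure ℝ) (r : ℕ) : ℝ := ∫ x, x ^ r ∂P

/-- λ₁(x) = x β^{-1/2} b₁ : the (conditional) Poisson mean attached to an attribute
of weight `x`. -/
def lamX (PY : Measure ℝ) (β x : ℝ) : ℝ := x * (Real.sqrt β)⁻¹ * mom PY 1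

/-- λ₀(y) = y β^{1/2} a₁ : the (conditional) Poisson mean attached to a vertex
of weight `y`. -/
def lamY (PX : Measure ℝ) (β y : ℝ) : ℝ := y * Real.sqrt β * mom PX 1

/-- pmf of the size-biased mixed Poisson variable Λ₁^{(r)}:
`P(Λ₁^{(r)} = s) = (E λ₁^r)⁻¹ E (e^{-λ₁} λ₁^{s+r} / s!)`, where `λ₁ = X₁ β^{-1/2} b₁`. -/
def pLamX (PX PY : Measure ℝ) (β : ℝ) (r s : ℕ) : ℝ :=
  (∫ x, lamX PY β x ^ r ∂PX)⁻¹ *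
    ∫ x, Real.exp (-lamX PY β x) * lamX PY β x ^ (s + r) / (s.factorial : ℝ) ∂PX

/-- pmf of the size-biased mixed Poisson variable Λ₀^{(r)}:
`P(Λ₀^{(r)} = s) = (E λ₀^r)⁻¹ E (e^{-λ₀} λ₀^{s+r} / s!)`, where `λ₀ = Y₁ β^{1/2} a₁`. -/
def pLamY (PX PY : Measure ℝ) (β : ℝ) (r s : ℕ) : ℝ :=
  (∫ y, lamY PX β y ^ r ∂PY)⁻¹ *
    ∫ y, Real.exp (-lamY PX β y) * lamY PX β y ^ (s + r) / (s.factorial : ℝ) ∂PY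

/-- `E Λ₁`. -/
def eLamX (PX PY : Measure ℝ) (β : ℝ) : ℝ := ∑' s : ℕ, (s : ℝ) * pLamX PX PY β 0 s

/-- pmf of τ: `P(τ = s) = ((s+1)/E Λ₁) P(Λ₁ = s+1)`. -/
def pTau (PX PY : Measure ℝ) (β : ℝ) (s : ℕ) : ℝ :=
  (((s : ℝ) + 1) / eLamX PX PY β) * pLamX PX PY β 0 (s + 1)

/-- pmf of `τ₁ + ⋯ + τ_i` for i.i.d. τⱼ (i-fold convolution of `pTau`). -/
def pTauConv (PX PY : Measure ℝ) (β : ℝ) : ℕ → ℕ → ℝ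
  | 0, s => if s = 0 then 1 else 0
  | i + 1, s =>
      ∑ j ∈ Finset.range (s + 1), pTauConv PX PY β i j * pTau PX PY β (s - j)

/-- pmf of the randomly stopped sum `d_*^{(r)} = Σ_{j=1}^{Λ₀^{(r)}} τ_j`
(with the τⱼ i.i.d. and independent of Λ₀^{(r)}). -/
def pDstar (PX PY : Measure ℝ) (β : ℝ) (r s : ℕ) : ℝ :=
  ∑' i : ℕ, pLamY PX PY β r i * pTauConv PX PY β i s

/-- pmf of `d_* = Σ_{j=1}^{Λ₀} τ_j` conditionally on `Y₁ = y`
(so that Λ₀ is Poisson with mean `λ₀(y)`, independent of the τⱼ). -/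
def pDstarCond (PX PY : Measure ℝ) (β y : ℝ) (s : ℕ) : ℝ :=
  ∑' i : ℕ, pois (lamY PX β y) i * pTauConv PX PY β i s

/-- pmf of `d_*^{(1)} + Λ₁^{(3)}` for independent summands. -/
def pSumA (PX PY : Measure ℝ) (β : ℝ) (s : ℕ) : ℝ :=
  ∑ p ∈ Finset.range (s + 1), pDstar PX PY β 1 p * pLamX PX PY β 3 (s - p)

/-- pmf of `d_*^{(2)} + Λ₁^{(2)} + Λ₂^{(2)}` for independent summands,
`Λ₂^{(2)}` being distributed as `Λ₁^{(2)}`. -/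
def pSumB (PX PY : Measure ℝ) (β : ℝ) (s : ℕ) : ℝ :=
  ∑ p ∈ Finset.range (s + 1), ∑ q ∈ Finset.range (s - p + 1),
    pDstar PX PY β 2 p * pLamX PX PY β 2 q * pLamX PX PY β 2 (s - p - q)

/-- Tail sum `Σ_{i ≥ k} f i` of a pmf `f`. -/
def tailSum (f : ℕ → ℝ) (k : ℕ) : ℝ := ∑' i : ℕ, f (k + i)

/-- `a(k) = a₃ b₁³ P(d_*^{(1)} + Λ₁^{(3)} = k - 2)`. -/
def aFun (PX PY : Measure ℝ) (β : ℝ) (k : ℕ) : ℝ :=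
  mom PX 3 * mom PY 1 ^ 3 * pSumA PX PY β (k - 2)

/-- `b(k) = a₂² b₁² b₂ P(d_*^{(2)} + Λ₁^{(2)} + Λ₂^{(2)} = k - 2)`. -/
def bFun (PX PY : Measure ℝ) (β : ℝ) (k : ℕ) : ℝ :=
  mom PX 2 ^ 2 * mom PY 1 ^ 2 * mom PY 2 * pSumB PX PY β (k - 2)

/-- `A(k) = a₃ b₁³ P(d_*^{(1)} + Λ₁^{(3)} ≥ k - 2)`. -/
def AFun (PX PY : Measure ℝ) (β : ℝ) (k : ℕ) : ℝ :=
  mom PX 3 * mom PY 1 ^ 3 * tailSum (pSumA PX PY β) (k - 2)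

/-- `B(k) = a₂² b₁² b₂ P(d_*^{(2)} + Λ₁^{(2)} + Λ₂^{(2)} ≥ k - 2)`. -/
def BFun (PX PY : Measure ℝ) (β : ℝ) (k : ℕ) : ℝ :=
  mom PX 2 ^ 2 * mom PY 1 ^ 2 * mom PY 2 * tailSum (pSumB PX PY β) (k - 2)

/-!
Both sides are finite convolutions over `p ≤ k - 2`, so it suffices to match the factors.
In `x`, multiplying the Poisson weight of mean `λ₁ = c x` by `x³` is size-biasing of order three:
`x³ e^{-cx} (cx)^s / s! = c⁻³ e^{-cx} (cx)^{s+3} / s!`, whose integral is `a₃ P(Λ₁^{(3)} = s)`.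
In `y`, the conditional law of `d_*` is a Poisson mixture of the convolution powers of the law
of `τ`, which are bounded by `1`; dominated convergence lets `∫ y · (·) dP_Y` pass through the
mixture, and size-biasing of order one turns `Λ₀` into `Λ₀^{(1)}`.
-/

open Finset

lemma hasSum_pois (a : ℝ) : HasSum (pois a) 1 := by
  have h := (NormedSpace.expSeries_div_hasSum_exp (𝔸 := ℝ) a).mul_left (Real.exp (-a))
  rw [← Real.exp_eq_exp_ℝ, ← Real.exp_add, neg_add_cancel, Real.exp_zero] at h
  show HasSum (fun s => pois a s) 1
  simpa only [pois, mul_div_assoc] using h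

lemma pois_nonneg {a : ℝ} (ha : 0 ≤ a) (s : ℕ) : 0 ≤ pois a s := by
  unfold pois; positivity

lemma pois_le_one {a : ℝ} (ha : 0 ≤ a) (s : ℕ) : pois a s ≤ 1 :=
  (hasSum_pois a).tsum_eq ▸ (hasSum_pois a).summable.le_tsum s fun j _ => pois_nonneg ha j

@[fun_prop]
lemma measurable_pois (s : ℕ) : Measurable fun a => pois a s := by
  unfold pois; fun_prop

lemma abs_pois_mul_le {a : ℝ} (ha : 0 ≤ a) {w : ℕ → ℝ} (hw : ∀ i, |w i| ≤ 1) (i : ℕ) :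
    |pois a i * w i| ≤ pois a i := by
  rw [abs_mul, abs_of_nonneg (pois_nonneg ha i)]
  exact mul_le_of_le_one_right (pois_nonneg ha i) (hw i)

lemma summable_pois_mul {a : ℝ} (ha : 0 ≤ a) {w : ℕ → ℝ} (hw : ∀ i, |w i| ≤ 1) :
    Summable fun i => pois a i * w i :=
  (hasSum_pois a).summable.of_norm_bounded (abs_pois_mul_le ha hw)

lemma abs_tsum_pois_mul_le_one {a : ℝ} (ha : 0 ≤ a) {w : ℕ → ℝ} (hw : ∀ i, |w i| ≤ 1) :
    |∑' i, pois a i * w i| ≤ 1 := by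
  have hs := (summable_pois_mul ha hw).hasSum
  exact abs_le.2
    ⟨hasSum_le (fun i => (abs_le.1 (abs_pois_mul_le ha hw i)).1) (hasSum_pois a).neg hs,
      hasSum_le (fun i => (abs_le.1 (abs_pois_mul_le ha hw i)).2) hs (hasSum_pois a)⟩

section PoissonMixture

variable {α : Type*} [MeasurableSpace α] {P : Measure α} {g lam : α → ℝ} {w : ℕ → ℝ}

lemma integrable_mul_tsum_pois_mul (hg : Integrable g P) (hlam : Measurable lam)
    (hlam0 : ∀ᵐ y ∂P, 0 ≤ lam y) (hw : ∀ i, |w i| ≤ 1) :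
    Integrable (fun y => g y * ∑' i, pois (lam y) i * w i) P := by
  refine hg.mono (hg.aestronglyMeasurable.mul ?_) ?_
  · exact (Measurable.tsum fun i =>
      ((measurable_pois i).comp hlam).mul_const _).aestronglyMeasurable
  · filter_upwards [hlam0] with y hy
    rw [norm_mul]
    exact mul_le_of_le_one_right (norm_nonneg _) (abs_tsum_pois_mul_le_one hy hw)

lemma integrable_mul_pois_comp (hg : Integrable g P) (hlam : Measurable lam)
    (hlam0 : ∀ᵐ y ∂P, 0 ≤ lam y) (s : ℕ) : Integrable (fun y => g y * pois (lam y) s) P := by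
  refine hg.mono
    (hg.aestronglyMeasurable.mul ((measurable_pois s).comp hlam).aestronglyMeasurable) ?_
  filter_upwards [hlam0] with y hy
  rw [norm_mul, Real.norm_of_nonneg (pois_nonneg hy s)]
  exact mul_le_of_le_one_right (norm_nonneg _) (pois_le_one hy s)

lemma hasSum_integral_mul_pois_mul (hg : Integrable g P) (hlam : Measurable lam)
    (hlam0 : ∀ᵐ y ∂P, 0 ≤ lam y) (hw : ∀ i, |w i| ≤ 1) :
    HasSum (fun i => (∫ y, g y * pois (lam y) i ∂P) * w i)
      (∫ y, g y * ∑' i, pois (lam y) i * w i ∂P) := by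
  simp_rw [← integral_mul_const, mul_assoc]
  refine hasSum_integral_of_dominated_convergence (fun i y => |g y| * pois (lam y) i)
    (fun i => hg.aestronglyMeasurable.mul
      (((measurable_pois i).comp hlam).mul_const _).aestronglyMeasurable)
    (fun i => ?_) (ae_of_all _ fun y => ((hasSum_pois _).mul_left _).summable) ?_ ?_
  · filter_upwards [hlam0] with y hy
    rw [norm_mul]
    exact mul_le_mul_of_nonneg_left (abs_pois_mul_le hy hw i) (norm_nonneg _)
  · simp_rw [tsum_mul_left, (hasSum_pois _).tsum_eq, mul_one]
    exact hg.abs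
  · filter_upwards [hlam0] with y hy
    exact (summable_pois_mul hy hw).hasSum.mul_left (g y)

end PoissonMixture

lemma integral_pow_mul_pois_mul_const (P : Measure ℝ) {c : ℝ} (hc : c ≠ 0) {r : ℕ}
    (hr : ∫ x, x ^ r ∂P ≠ 0) (s : ℕ) :
    ∫ x, x ^ r * pois (x * c) s ∂P =
      (∫ x, x ^ r ∂P) * ((∫ x, (x * c) ^ r ∂P)⁻¹ *
        ∫ x, Real.exp (-(x * c)) * (x * c) ^ (s + r) / (s.factorial : ℝ) ∂P) := by
  have hpow : ∫ x, (x * c) ^ r ∂P = c ^ r * ∫ x, x ^ r ∂P := by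
    simp_rw [mul_pow, mul_comm _ (c ^ r), integral_const_mul]
  have hbias : ∫ x, Real.exp (-(x * c)) * (x * c) ^ (s + r) / (s.factorial : ℝ) ∂P =
      c ^ r * ∫ x, x ^ r * pois (x * c) s ∂P := by
    rw [← integral_const_mul]
    congr 1 with x
    simp only [pois, pow_add, mul_pow]
    ring
  rw [hpow, hbias]
  generalize ∫ x, x ^ r * pois (x * c) s ∂P = I
  field_simp

-- If `s * q s` is not summable, the `tsum` is `0` and so is every quotient.
lemma sum_range_sizeBias_le_one {q : ℕ → ℝ} (hq : ∀ s, 0 ≤ q s) (n : ℕ) :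
    ∑ t ∈ range n, ((t : ℝ) + 1) / (∑' s : ℕ, (s : ℝ) * q s) * q (t + 1) ≤ 1 := by
  set E := ∑' s : ℕ, (s : ℝ) * q s
  by_cases hs : Summable fun s : ℕ => (s : ℝ) * q s
  · have hE := hs.sum_le_tsum (range (n + 1)) fun s _ => mul_nonneg s.cast_nonneg (hq s)
    rw [sum_range_succ'] at hE
    push_cast at hE
    simp_rw [div_mul_eq_mul_div, ← sum_div]
    rcases (show 0 ≤ E from tsum_nonneg fun s => mul_nonneg s.cast_nonneg (hq s)).eq_or_lt
      with h0 | hpos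
    · simp [← h0]
    · rw [div_le_one hpos]
      simpa using hE
  · simp [E, tsum_eq_zero_of_not_summable hs]

section Model

variable {PX PY : Measure ℝ} {β : ℝ}

lemma measurable_lamX : Measurable (lamX PY β) :=
  (measurable_id.mul_const _).mul_const _

lemma measurable_lamY : Measurable (lamY PX β) :=
  (measurable_id.mul_const _).mul_const _

lemma ae_lamX_nonneg (hXnn : PX {x | x < 0} = 0) (hb1 : 0 ≤ mom PY 1) :
    ∀ᵐ x ∂PX, 0 ≤ lamX PY β x := by
  filter_upwards [measure_eq_zero_iff_ae_notMem.1 hXnn] with x hx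
  have : 0 ≤ x := not_lt.1 hx
  unfold lamX
  positivity

lemma ae_lamY_nonneg (hYnn : PY {y | y < 0} = 0) (ha1 : 0 ≤ mom PX 1) :
    ∀ᵐ y ∂PY, 0 ≤ lamY PX β y := by
  filter_upwards [measure_eq_zero_iff_ae_notMem.1 hYnn] with y hy
  have : 0 ≤ y := not_lt.1 hy
  unfold lamY
  positivity

lemma pLamX_nonneg (hX : ∀ᵐ x ∂PX, 0 ≤ lamX PY β x) (r s : ℕ) : 0 ≤ pLamX PX PY β r s :=
  mul_nonneg (inv_nonneg.2 (integral_nonneg_of_ae (hX.mono fun x hx => pow_nonneg hx r)))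
    (integral_nonneg_of_ae (hX.mono fun x hx => by positivity))

lemma pTau_nonneg (hX : ∀ᵐ x ∂PX, 0 ≤ lamX PY β x) (t : ℕ) : 0 ≤ pTau PX PY β t :=
  mul_nonneg (div_nonneg (by positivity)
    (tsum_nonneg fun s => mul_nonneg s.cast_nonneg (pLamX_nonneg hX 0 s))) (pLamX_nonneg hX 0 _)

lemma sum_range_pTau_le_one (hX : ∀ᵐ x ∂PX, 0 ≤ lamX PY β x) (n : ℕ) :
    ∑ t ∈ range n, pTau PX PY β t ≤ 1 :=
  sum_range_sizeBias_le_one (pLamX_nonneg hX 0) n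

lemma pTauConv_nonneg (hX : ∀ᵐ x ∂PX, 0 ≤ lamX PY β x) : ∀ i s, 0 ≤ pTauConv PX PY β i s
  | 0, s => by unfold pTauConv; split_ifs <;> norm_num
  | i + 1, s => sum_nonneg fun j _ => mul_nonneg (pTauConv_nonneg hX i j) (pTau_nonneg hX _)

lemma pTauConv_le_one (hX : ∀ᵐ x ∂PX, 0 ≤ lamX PY β x) : ∀ i s, pTauConv PX PY β i s ≤ 1
  | 0, s => by unfold pTauConv; split_ifs <;> norm_num
  | i + 1, s =>
    calc ∑ j ∈ range (s + 1), pTauConv PX PY β i j * pTau PX PY β (s - j)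
        ≤ ∑ j ∈ range (s + 1), pTau PX PY β (s - j) :=
          sum_le_sum fun j _ => mul_le_of_le_one_left (pTau_nonneg hX _) (pTauConv_le_one hX i j)
      _ = ∑ t ∈ range (s + 1), pTau PX PY β t := by
          simpa using sum_range_reflect (pTau PX PY β) (s + 1)
      _ ≤ 1 := sum_range_pTau_le_one hX _

lemma abs_pTauConv_le_one (hX : ∀ᵐ x ∂PX, 0 ≤ lamX PY β x) (i s : ℕ) :
    |pTauConv PX PY β i s| ≤ 1 :=
  abs_le.2 ⟨by linarith [pTauConv_nonneg hX i s], pTauConv_le_one hX i s⟩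

lemma integral_pow_mul_pois_lamX (hc : (√β)⁻¹ * mom PY 1 ≠ 0) {r : ℕ} (hr : mom PX r ≠ 0)
    (s : ℕ) : ∫ x, x ^ r * pois (lamX PY β x) s ∂PX = mom PX r * pLamX PX PY β r s := by
  have h : lamX PY β = fun x => x * ((√β)⁻¹ * mom PY 1) := funext fun x => mul_assoc _ _ _
  simp only [pLamX, h]
  exact integral_pow_mul_pois_mul_const PX hc hr s

lemma integral_pow_mul_pois_lamY (hc : √β * mom PX 1 ≠ 0) {r : ℕ} (hr : mom PY r ≠ 0)
    (s : ℕ) : ∫ y, y ^ r * pois (lamY PX β y) s ∂PY = mom PY r * pLamY PX PY β r s := by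
  have h : lamY PX β = fun y => y * (√β * mom PX 1) := funext fun y => mul_assoc _ _ _
  simp only [pLamY, h]
  exact integral_pow_mul_pois_mul_const PY hc hr s

lemma integrable_mul_pDstarCond (hX : ∀ᵐ x ∂PX, 0 ≤ lamX PY β x)
    (hY : ∀ᵐ y ∂PY, 0 ≤ lamY PX β y) (hb1 : Integrable (fun y : ℝ => y) PY) (p : ℕ) :
    Integrable (fun y => y * pDstarCond PX PY β y p) PY :=
  integrable_mul_tsum_pois_mul hb1 measurable_lamY hY (abs_pTauConv_le_one hX · p)

lemma integral_mul_pDstarCond (hX : ∀ᵐ x ∂PX, 0 ≤ lamX PY β x)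
    (hY : ∀ᵐ y ∂PY, 0 ≤ lamY PX β y) (hb1 : Integrable (fun y : ℝ => y) PY)
    (hb1ne : mom PY 1 ≠ 0) (hc : √β * mom PX 1 ≠ 0) (p : ℕ) :
    ∫ y, y * pDstarCond PX PY β y p ∂PY = mom PY 1 * pDstar PX PY β 1 p := by
  have h := hasSum_integral_mul_pois_mul hb1 measurable_lamY hY (abs_pTauConv_le_one hX · p)
  have hbias : ∀ i, ∫ y, y * pois (lamY PX β y) i ∂PY = mom PY 1 * pLamY PX PY β 1 i := by
    simpa only [pow_one] using integral_pow_mul_pois_lamY hc hb1ne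
  simp only [hbias, mul_assoc] at h
  rw [pDstar, ← tsum_mul_left]
  exact h.tsum_eq.symm

lemma integral_mul_sum_pDstarCond_mul (hX : ∀ᵐ x ∂PX, 0 ≤ lamX PY β x)
    (hY : ∀ᵐ y ∂PY, 0 ≤ lamY PX β y) (hb1 : Integrable (fun y : ℝ => y) PY)
    (hb1ne : mom PY 1 ≠ 0) (hc : √β * mom PX 1 ≠ 0) (c : ℝ) (v : ℕ → ℝ) (n : ℕ) :
    ∫ y, c * y * ∑ p ∈ range (n + 1), pDstarCond PX PY β y p * v p ∂PY =
      ∑ p ∈ range (n + 1), c * v p * (mom PY 1 * pDstar PX PY β 1 p) := by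
  simp_rw [mul_sum]
  rw [integral_finsetSum _ fun p _ => ((integrable_mul_pDstarCond hX hY hb1 p).const_mul
    (c * v p)).congr (ae_of_all _ fun y => by ring)]
  refine sum_congr rfl fun p _ => ?_
  rw [← integral_mul_pDstarCond hX hY hb1 hb1ne hc p, ← integral_const_mul]
  congr 1 with y
  ring

end Model

end RIG

open RIG

theorem statement15_general
    (PX PY : Measure ℝ)
    (hXnn : PX {x | x < 0} = 0) (hYnn : PY {y | y < 0} = 0)
    (β : ℝ) (hβ : 0 < β)
    (ha1pos : 0 < mom PX 1)
    (ha3 : Integrable (fun x : ℝ => x ^ 3) PX) (ha3pos : 0 < mom PX 3)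
    (hb1 : Integrable (fun y : ℝ => y) PY) (hb1pos : 0 < mom PY 1)
    (k : ℕ) :
    ∫ x, ∫ y, x ^ 3 * y *
        (∑ p ∈ Finset.range (k - 2 + 1),
          pDstarCond PX PY β y p * pois (lamX PY β x) (k - 2 - p)) ∂PY ∂PX =
      mom PX 3 * mom PY 1 * pSumA PX PY β (k - 2) := by
  have hX := ae_lamX_nonneg (β := β) hXnn hb1pos.le
  have hY := ae_lamY_nonneg (β := β) hYnn ha1pos.le
  have hcX : (√β)⁻¹ * mom PY 1 ≠ 0 := by positivity
  have hcY : √β * mom PX 1 ≠ 0 := by positivity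
  generalize k - 2 = n
  simp_rw [integral_mul_sum_pDstarCond_mul hX hY hb1 hb1pos.ne' hcY]
  rw [integral_finsetSum _ fun p _ =>
    (integrable_mul_pois_comp ha3 measurable_lamX hX _).mul_const _]
  simp_rw [integral_mul_const, integral_pow_mul_pois_lamX hcX ha3pos.ne', pSumA, Finset.mul_sum]
  exact Finset.sum_congr rfl fun p _ => by ring

/-- formula (21) of the paper:
`E(X₁³ Y₁ P(d_* + Λ₁ = k−2 | X₁, Y₁)) = a₃ b₁ P(d_*^{(1)} + Λ₁^{(3)} = k−2)`,
where conditionally on `(X₁, Y₁)` the variable `Λ₁` is Poisson with mean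
`X₁ β^{-1/2} b₁`, `Λ₀` is Poisson with mean `Y₁ β^{1/2} a₁`,
`d_* = Σ_{j=1}^{Λ₀} τ_j`, and `d_*` and `Λ₁` are conditionally independent;
`d_*^{(1)}` and `Λ₁^{(3)}` are independent. -/
theorem statement15
    (PX PY : Measure ℝ) [IsProbabilityMeasure PX] [IsProbabilityMeasure PY]
    (hXnn : PX {x | x < 0} = 0) (hYnn : PY {y | y < 0} = 0)
    (β : ℝ) (hβ : 0 < β)
    (ha1 : Integrable (fun x : ℝ => x) PX) (ha1pos : 0 < mom PX 1)
    (ha3 : Integrable (fun x : ℝ => x ^ 3) PX) (ha3pos : 0 < mom PX 3)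
    (hb1 : Integrable (fun y : ℝ => y) PY) (hb1pos : 0 < mom PY 1)
    (k : ℕ) (hk : 2 ≤ k) :
    ∫ x, ∫ y, x ^ 3 * y *
        (∑ p ∈ Finset.range (k - 2 + 1),
          pDstarCond PX PY β y p * pois (lamX PY β x) (k - 2 - p)) ∂PY ∂PX =
      mom PX 3 * mom PY 1 * pSumA PX PY β (k - 2) :=
  statement15_general PX PY hXnn hYnn β hβ ha1pos ha3 ha3pos hb1 hb1pos k
end
end
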